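/- arXiv:2207.13557 — 4 statements merged into one kernel-verified Lean document; each statement's English description precedes it below -/
import Mathlib

section
/- Let M ≥ 2 be an integer, set α = 1/(M+1), and for a binary sequence (x_i)_{i≥1} with x = Σ_{i≥1} x_i 2^{−i} define g(x) = Σ_{i=1}^∞ x_i · M^(Σ_{j=1}^{i-1} x_j) · (M+1)^(−i) (this is well-defined, i.e., independent of the choice of binary expansion of x). Then g satisfies the Salem functional equations: g(x) = α·g(2x) for 0 ≤ x < 1/2, and g(x) = (1−α)·g(2x−1) + α for 1/2 ≤ x ≤ 1. -/
/-!
Write `x = 0.a₀a₁a₂…` in binary and let `S(a) = ∑ aᵢ c^{sᵢ} (c+1)^{-(i+1)}`, `sᵢ` the number of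
ones among `a₀, …, a_{i-1}`. Splitting off the first digit gives
`x = (a₀ + x')/2` and `S(a) = (a₀ + c^{a₀} S(a'))/(c+1)`, which are Salem's equations once `S`
is known to depend only on `x`. For that, a quantity that is bounded and, up to the factor
`c/(c+1) < 1`, dominated by the same quantity one digit further must vanish: this shows that
`x = 0` forces `S = 0`, that `x = 1` forces `S = 1`, and then that two expansions of the same
`x` have the same `S` (when their first digits differ, the tails are expansions of `0` and `1`).
-/

open Finset Real Filter Topology

theorem eq_zero_of_forall_abs_le_mul_abs {α : Type*} {s : Set α} {f : α → ℝ} {ρ B : ℝ}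
    (hρ₀ : 0 ≤ ρ) (hρ₁ : ρ < 1) (hB : ∀ a ∈ s, |f a| ≤ B)
    (hf : ∀ a ∈ s, ∃ b ∈ s, |f a| ≤ ρ * |f b|) : ∀ a ∈ s, f a = 0 := by
  have hpow : ∀ n : ℕ, ∀ a ∈ s, |f a| ≤ ρ ^ n * B := by
    intro n
    induction n with
    | zero => simpa using hB
    | succ n ih =>
      intro a ha
      obtain ⟨b, hb, hab⟩ := hf a ha
      calc |f a| ≤ ρ * |f b| := hab
        _ ≤ ρ * (ρ ^ n * B) := by gcongr; exact ih b hb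
        _ = ρ ^ (n + 1) * B := by ring
  intro a ha
  have hlim : Tendsto (fun n : ℕ => ρ ^ n * B) atTop (𝓝 0) := by
    simpa using (tendsto_pow_atTop_nhds_zero_of_lt_one hρ₀ hρ₁).mul_const B
  exact abs_nonpos_iff.mp (ge_of_tendsto' hlim fun n => hpow n a ha)

theorem Real.ofDigits_two_eq_tsum (a : ℕ → Fin 2) :
    ofDigits a = ∑' i, (a i : ℝ) / 2 ^ (i + 1) := by
  simp [ofDigits, ofDigitsTerm, div_eq_mul_inv]

theorem Real.ofDigits_two_eq_head_add_tail (a : ℕ → Fin 2) :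
    ofDigits a = ((a 0 : ℝ) + ofDigits fun i => a (i + 1)) / 2 := by
  rw [ofDigits_eq_sum_add_ofDigits a 1]
  simp only [range_one, ofDigitsTerm, Nat.cast_ofNat, sum_singleton, zero_add, pow_one]
  ring

-- Digit `a i` is the paper's `x_{i+1}`, and `c` plays the role of `M`.
noncomputable def salemTerm (c : ℝ) (a : ℕ → Fin 2) (i : ℕ) : ℝ :=
  (a i : ℝ) * c ^ (∑ j ∈ range i, (a j : ℕ)) * (c + 1)⁻¹ ^ (i + 1)

noncomputable def salemSum (c : ℝ) (a : ℕ → Fin 2) : ℝ :=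
  ∑' i, salemTerm c a i

noncomputable def salemFun (c : ℝ) : ℝ → ℝ :=
  Function.extend (ofDigits (b := 2)) (salemSum c) 0

section

variable {c : ℝ}

theorem div_add_one_lt_one (hc : 0 ≤ c) : c / (c + 1) < 1 :=
  (div_lt_one (by linarith)).mpr (by linarith)

theorem salemTerm_le (hc : 1 ≤ c) (a : ℕ → Fin 2) (i : ℕ) :
    salemTerm c a i ≤ (c + 1)⁻¹ * (c / (c + 1)) ^ i := by
  have hai : (a i : ℝ) ≤ 1 := by exact_mod_cast Nat.le_of_lt_succ (a i).isLt
  have hones : ∑ j ∈ range i, (a j : ℕ) ≤ i := by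
    simpa using sum_le_card_nsmul (range i) _ 1 fun j _ => Nat.le_of_lt_succ (a j).isLt
  calc salemTerm c a i ≤ 1 * c ^ i * (c + 1)⁻¹ ^ (i + 1) := by
        unfold salemTerm
        gcongr
    _ = (c + 1)⁻¹ * (c / (c + 1)) ^ i := by rw [div_pow, pow_succ]; ring

theorem summable_salemTerm (hc : 1 ≤ c) (a : ℕ → Fin 2) : Summable (salemTerm c a) :=
  .of_nonneg_of_le (fun i => by unfold salemTerm; positivity) (salemTerm_le hc a)
    ((summable_geometric_of_lt_one (by positivity) (div_add_one_lt_one (by linarith))).mul_left _)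

theorem salemSum_nonneg (hc : 0 ≤ c) (a : ℕ → Fin 2) : 0 ≤ salemSum c a :=
  tsum_nonneg fun i => by unfold salemTerm; positivity

theorem salemSum_le_one (hc : 1 ≤ c) (a : ℕ → Fin 2) : salemSum c a ≤ 1 := by
  have hρ := div_add_one_lt_one (c := c) (by linarith)
  calc salemSum c a ≤ ∑' i, (c + 1)⁻¹ * (c / (c + 1)) ^ i :=
        (summable_salemTerm hc a).tsum_mono
          ((summable_geometric_of_lt_one (by positivity) hρ).mul_left _) (salemTerm_le hc a)
    _ = 1 := by
        rw [tsum_mul_left, tsum_geometric_of_lt_one (by positivity) hρ]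
        field_simp
        ring

theorem salemSum_eq_head_add_tail (hc : 1 ≤ c) (a : ℕ → Fin 2) :
    salemSum c a = ((a 0 : ℝ) + c ^ (a 0 : ℕ) * salemSum c fun i => a (i + 1)) / (c + 1) := by
  have hshift : ∀ i, salemTerm c a (i + 1) =
      c ^ (a 0 : ℕ) / (c + 1) * salemTerm c (fun i => a (i + 1)) i := by
    intro i
    simp only [salemTerm, sum_range_succ', pow_add, pow_succ]
    ring
  rw [salemSum, (summable_salemTerm hc a).tsum_eq_zero_add, tsum_congr hshift, tsum_mul_left,
    salemSum, salemTerm]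
  simp only [range_zero, sum_empty, pow_zero, mul_one, zero_add, pow_one]
  ring

theorem salemSum_eq_zero_of_ofDigits_eq_zero (hc : 1 ≤ c) {a : ℕ → Fin 2}
    (ha : ofDigits a = 0) : salemSum c a = 0 := by
  refine eq_zero_of_forall_abs_le_mul_abs (s := {a | ofDigits a = 0}) (ρ := c / (c + 1))
    (div_nonneg (by linarith) (by linarith)) (div_add_one_lt_one (by linarith))
    (fun a _ => (abs_of_nonneg (salemSum_nonneg (by linarith) a)).trans_le
      (salemSum_le_one hc a)) (fun a (ha : ofDigits a = 0) => ?_) a ha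
  have hsplit := ofDigits_two_eq_head_add_tail a
  have hhead : ((a 0 : ℕ) : ℝ) = 0 := by
    linarith [ofDigits_nonneg (fun i => a (i + 1)), (Nat.cast_nonneg _ : (0 : ℝ) ≤ (a 0 : ℕ))]
  refine ⟨fun i => a (i + 1), show _ = _ by linarith, ?_⟩
  rw [salemSum_eq_head_add_tail hc a, hhead, Nat.cast_eq_zero.mp hhead, pow_zero, zero_add,
    one_mul, abs_div, abs_of_pos (by linarith : (0 : ℝ) < c + 1), div_mul_eq_mul_div]
  gcongr
  exact le_mul_of_one_le_left (abs_nonneg _) hc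

theorem salemSum_eq_one_of_ofDigits_eq_one (hc : 1 ≤ c) {a : ℕ → Fin 2} (ha : ofDigits a = 1) :
    salemSum c a = 1 := by
  suffices h : ∀ a ∈ {a : ℕ → Fin 2 | ofDigits a = 1}, 1 - salemSum c a = 0 by
    linarith [h a ha]
  refine eq_zero_of_forall_abs_le_mul_abs (ρ := c / (c + 1))
    (div_nonneg (by linarith) (by linarith)) (div_add_one_lt_one (by linarith))
    (fun a _ => abs_sub_le_of_nonneg_of_le zero_le_one le_rfl
      (salemSum_nonneg (by linarith) a) (salemSum_le_one hc a)) fun a (ha : ofDigits a = 1) => ?_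
  have hsplit := ofDigits_two_eq_head_add_tail a
  have hhead : ((a 0 : ℕ) : ℝ) = 1 := by
    linarith [ofDigits_le_one (fun i => a (i + 1)),
      (by exact_mod_cast Nat.le_of_lt_succ (a 0).isLt : ((a 0 : ℕ) : ℝ) ≤ 1)]
  refine ⟨fun i => a (i + 1), show _ = _ by linarith, ?_⟩
  have hc1 : c + 1 ≠ 0 := by linarith
  have hcontract : 1 - salemSum c a = c / (c + 1) * (1 - salemSum c fun i => a (i + 1)) := by
    rw [salemSum_eq_head_add_tail hc a, hhead, Nat.cast_eq_one.mp hhead, pow_one]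
    field_simp
    ring
  rw [hcontract, abs_mul, abs_of_nonneg (div_nonneg (by linarith) (by linarith))]

theorem salemSum_eq_of_ofDigits_eq_of_heads_one_zero (hc : 1 ≤ c)
    {a e : ℕ → Fin 2} (ha : (a 0 : ℕ) = 1) (he : (e 0 : ℕ) = 0) (h : ofDigits a = ofDigits e) :
    salemSum c a = salemSum c e := by
  have hsa := ofDigits_two_eq_head_add_tail a
  have hse := ofDigits_two_eq_head_add_tail e
  rw [ha, Nat.cast_one] at hsa
  rw [he, Nat.cast_zero] at hse
  have hta : ofDigits (fun i => a (i + 1)) = 0 := by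
    linarith [ofDigits_nonneg (fun i => a (i + 1)), ofDigits_le_one (fun i => e (i + 1))]
  have hte : ofDigits (fun i => e (i + 1)) = 1 := by
    linarith [ofDigits_nonneg (fun i => a (i + 1)), ofDigits_le_one (fun i => e (i + 1))]
  rw [salemSum_eq_head_add_tail hc a, salemSum_eq_head_add_tail hc e, ha, he,
    salemSum_eq_zero_of_ofDigits_eq_zero hc hta, salemSum_eq_one_of_ofDigits_eq_one hc hte]
  simp

theorem salemSum_eq_of_ofDigits_eq (hc : 1 ≤ c) {a e : ℕ → Fin 2}
    (h : ofDigits a = ofDigits e) : salemSum c a = salemSum c e := by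
  suffices hdiff : ∀ p ∈ {p : (ℕ → Fin 2) × (ℕ → Fin 2) | ofDigits p.1 = ofDigits p.2},
      salemSum c p.1 - salemSum c p.2 = 0 by
    linarith [hdiff (a, e) h]
  refine eq_zero_of_forall_abs_le_mul_abs (ρ := c / (c + 1))
    (div_nonneg (by linarith) (by linarith)) (div_add_one_lt_one (by linarith))
    (fun p _ => abs_sub_le_of_nonneg_of_le (salemSum_nonneg (by linarith) p.1)
      (salemSum_le_one hc p.1) (salemSum_nonneg (by linarith) p.2) (salemSum_le_one hc p.2)) ?_
  rintro ⟨a, e⟩ (hp : ofDigits a = ofDigits e)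
  by_cases hhead : (a 0 : ℕ) = (e 0 : ℕ)
  · have hsa := ofDigits_two_eq_head_add_tail a
    have hse := ofDigits_two_eq_head_add_tail e
    rw [hhead] at hsa
    refine ⟨(fun i => a (i + 1), fun i => e (i + 1)), show _ = _ by linarith, ?_⟩
    have hdigit : c ^ (e 0 : ℕ) ≤ c := by
      simpa using pow_le_pow_right₀ hc (Nat.le_of_lt_succ (e 0).isLt)
    have hc1 : c + 1 ≠ 0 := by linarith
    have hcontract : salemSum c a - salemSum c e = c ^ (e 0 : ℕ) / (c + 1) *
        ((salemSum c fun i => a (i + 1)) - salemSum c fun i => e (i + 1)) := by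
      rw [salemSum_eq_head_add_tail hc a, salemSum_eq_head_add_tail hc e, hhead]
      field_simp
      ring
    rw [hcontract, abs_mul, abs_of_nonneg (by positivity)]
    gcongr
  · refine ⟨(a, e), hp, ?_⟩
    have := (a 0).isLt
    have := (e 0).isLt
    rcases (by omega : (a 0 : ℕ) = 1 ∧ (e 0 : ℕ) = 0 ∨ (e 0 : ℕ) = 1 ∧ (a 0 : ℕ) = 0) with
      ⟨ha, he⟩ | ⟨he, ha⟩
    · simp [salemSum_eq_of_ofDigits_eq_of_heads_one_zero hc ha he hp]
    · simp [salemSum_eq_of_ofDigits_eq_of_heads_one_zero hc he ha hp.symm]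

theorem salemFun_ofDigits (hc : 1 ≤ c) (a : ℕ → Fin 2) :
    salemFun c (ofDigits a) = salemSum c a :=
  Function.FactorsThrough.extend_apply (fun _ _ h => salemSum_eq_of_ofDigits_eq hc h) 0 a

theorem salemFun_eq (hc : 1 ≤ c) (b : Fin 2) {x : ℝ} (hx : 2 * x - (b : ℕ) ∈ Set.Icc 0 1) :
    salemFun c x = ((b : ℕ) + c ^ (b : ℕ) * salemFun c (2 * x - (b : ℕ))) / (c + 1) := by
  obtain ⟨a, -, ha⟩ := ofDigits_SurjOn (by norm_num : 1 < 2) hx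
  let d : ℕ → Fin 2 := fun | 0 => b | i + 1 => a i
  have hd : ofDigits d = x := by
    rw [ofDigits_two_eq_head_add_tail]
    change ((b : ℕ) + ofDigits a) / 2 = x
    linarith
  calc salemFun c x = salemSum c d := by rw [← hd, salemFun_ofDigits hc]
    _ = _ := by rw [salemSum_eq_head_add_tail hc, ← ha, salemFun_ofDigits hc]

theorem salemFun_of_lt_half (hc : 1 ≤ c) {x : ℝ} (h₀ : 0 ≤ x) (h : x < 1 / 2) :
    salemFun c x = salemFun c (2 * x) / (c + 1) := by
  simpa using salemFun_eq hc 0 (x := x) ⟨by simp; linarith, by simp; linarith⟩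

theorem salemFun_of_half_le (hc : 1 ≤ c) {x : ℝ} (h : 1 / 2 ≤ x) (h₁ : x ≤ 1) :
    salemFun c x = (1 + c * salemFun c (2 * x - 1)) / (c + 1) := by
  simpa using salemFun_eq hc 1 (x := x) ⟨by simp; linarith, by simp; linarith⟩

end

/-- The function `g` defined on binary expansions by
`g(Σ x_i 2^{-i}) = Σ x_i M^{Σ_{j<i} x_j} (M+1)^{-i}` is well defined (there exists a
function of the real number agreeing with the formula on every binary expansion) and
satisfies Salem's functional equations with `α = 1/(M+1)`. -/
theorem stmt6 (M : ℕ) (hM : 2 ≤ M) :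
    ∃ g : ℝ → ℝ,
      (∀ x : ℕ → ℕ, (∀ i, x i ≤ 1) →
        g (∑' i : ℕ, (x (i + 1) : ℝ) / 2 ^ (i + 1)) =
          ∑' i : ℕ, (x (i + 1) : ℝ) * (M : ℝ) ^ (∑ j ∈ Finset.range i, x (j + 1)) *
            ((M : ℝ) + 1)⁻¹ ^ (i + 1)) ∧
      (∀ x : ℝ, 0 ≤ x → x < 1 / 2 → g x = (1 / ((M : ℝ) + 1)) * g (2 * x)) ∧
      (∀ x : ℝ, 1 / 2 ≤ x → x ≤ 1 →
        g x = (1 - 1 / ((M : ℝ) + 1)) * g (2 * x - 1) + 1 / ((M : ℝ) + 1)) := by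
  have hc : (1 : ℝ) ≤ M := by exact_mod_cast (by omega : 1 ≤ M)
  have hc1 : (M : ℝ) + 1 ≠ 0 := by positivity
  refine ⟨salemFun M, fun x hx => ?_, fun x h₀ h => ?_, fun x h h₁ => ?_⟩
  · have h := salemFun_ofDigits hc fun i => ⟨x (i + 1), Nat.lt_succ_of_le (hx (i + 1))⟩
    rwa [ofDigits_two_eq_tsum] at h
  · rw [salemFun_of_lt_half hc h₀ h]
    ring
  · rw [salemFun_of_half_le hc h h₁]
    field_simp
    ring
end

section
/- For α ∈ (0,1), the function g : [0,1] → [0,1] defined on binary expansions by g(Σ_{i≥1} x_i 2^{−i}) = Σ_{i=1}^∞ x_i · (1−α)^(Σ_{j=1}^{i-1} x_j) · α^(i − Σ_{j=1}^{i-1} x_j) is well-defined (agrees on the two binary expansions of dyadic rationals) and continuous on [0,1]. -/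
/-!
The function is the fixed point of de Rham's functional equation `f (t / 2) = α f t`,
`f ((1 + t) / 2) = α + (1 - α) f t`. On continuous `f : ℝ → [0, 1]` with `f 0 = 0`, `f 1 = 1`
the corresponding operator contracts the sup distance by `max α (1 - α) < 1`, so Banach's theorem
gives a continuous fixed point. At `0.d₀d₁d₂…` the fixed point and Salem's series obey the same
recursion in the first digit, so their difference `u` satisfies
`|u d| ≤ max α (1 - α) |u (fun i => d (i + 1))|`; being bounded, it vanishes. As the fixed point
is a function of the real number alone, the series cannot depend on the binary expansion chosen.
-/

open Filter Topology in
theorem eq_zero_of_abs_le_mul_abs_comp {β : Type*} {σ : β → β} {u : β → ℝ} {C m : ℝ}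
    (hm₀ : 0 ≤ m) (hm₁ : m < 1) (hC : ∀ b, |u b| ≤ C) (hu : ∀ b, |u b| ≤ m * |u (σ b)|)
    (b : β) : u b = 0 := by
  have hpow : ∀ n b, |u b| ≤ C * m ^ n := by
    intro n
    induction n with
    | zero => simpa using hC
    | succ n ih =>
      intro b
      calc |u b| ≤ m * |u (σ b)| := hu b
        _ ≤ m * (C * m ^ n) := by gcongr; exact ih _
        _ = C * m ^ (n + 1) := by ring
  have hlim : Tendsto (fun n => C * m ^ n) atTop (𝓝 0) := by
    simpa using (tendsto_pow_atTop_nhds_zero_of_lt_one hm₀ hm₁).const_mul C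
  exact abs_nonpos_iff.mp (ge_of_tendsto' hlim fun n => hpow n b)

theorem Real.ofDigits_eq_head_add_div {b : ℕ} (d : ℕ → Fin b) :
    Real.ofDigits d = (d 0 + Real.ofDigits (fun i => d (i + 1))) / b := by
  rw [Real.ofDigits_eq_sum_add_ofDigits d 1]
  simp [Real.ofDigitsTerm]
  ring

namespace Salem

open Set BoundedContinuousFunction

def onesBefore (d : ℕ → Fin 2) (i : ℕ) : ℕ := ∑ j ∈ Finset.range i, (d j : ℕ)

theorem onesBefore_le (d : ℕ → Fin 2) (i : ℕ) : onesBefore d i ≤ i := by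
  calc onesBefore d i ≤ ∑ _j ∈ Finset.range i, 1 :=
        Finset.sum_le_sum fun j _ => Nat.le_of_lt_succ (d j).isLt
    _ = i := by simp

theorem onesBefore_succ (d : ℕ → Fin 2) (i : ℕ) :
    onesBefore d (i + 1) = d 0 + onesBefore (fun j => d (j + 1)) i := by
  rw [onesBefore, Finset.sum_range_succ', add_comm]
  rfl

noncomputable def salemTerm (α : ℝ) (d : ℕ → Fin 2) (i : ℕ) : ℝ :=
  (d i : ℝ) * (1 - α) ^ onesBefore d i * α ^ (i + 1 - onesBefore d i)

noncomputable def salemSum (α : ℝ) (d : ℕ → Fin 2) : ℝ := ∑' i, salemTerm α d i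

variable {α : ℝ} {d : ℕ → Fin 2}

theorem salemTerm_zero : salemTerm α d 0 = (d 0 : ℝ) * α := by
  simp [salemTerm, onesBefore]

theorem salemTerm_succ_of_head_eq_zero (h : d 0 = 0) (i : ℕ) :
    salemTerm α d (i + 1) = α * salemTerm α (fun j => d (j + 1)) i := by
  have hle := onesBefore_le (fun j => d (j + 1)) i
  simp only [salemTerm, onesBefore_succ, h, Fin.val_zero, zero_add]
  rw [show i + 1 + 1 - onesBefore (fun j => d (j + 1)) i
      = i + 1 - onesBefore (fun j => d (j + 1)) i + 1 by omega]
  ring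

theorem salemTerm_succ_of_head_eq_one (h : d 0 = 1) (i : ℕ) :
    salemTerm α d (i + 1) = (1 - α) * salemTerm α (fun j => d (j + 1)) i := by
  simp only [salemTerm, onesBefore_succ, h, Fin.val_one]
  rw [show i + 1 + 1 - (1 + onesBefore (fun j => d (j + 1)) i)
      = i + 1 - onesBefore (fun j => d (j + 1)) i by omega]
  ring

theorem norm_salemTerm_le (hα : α ∈ Icc 0 1) (i : ℕ) :
    ‖salemTerm α d i‖ ≤ max α (1 - α) ^ (i + 1) := by
  have h₀ : 0 ≤ α := hα.1
  have h₁ : 0 ≤ 1 - α := sub_nonneg.mpr hα.2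
  have hd : (d i : ℝ) ≤ 1 := by exact_mod_cast Nat.le_of_lt_succ (d i).isLt
  have hk := onesBefore_le d i
  rw [salemTerm, mul_assoc, norm_mul, Real.norm_natCast, Real.norm_of_nonneg (by positivity)]
  calc (d i : ℝ) * ((1 - α) ^ onesBefore d i * α ^ (i + 1 - onesBefore d i))
      ≤ 1 * (max α (1 - α) ^ onesBefore d i * max α (1 - α) ^ (i + 1 - onesBefore d i)) := by
        gcongr
        exacts [le_max_right _ _, le_max_left _ _]
    _ = max α (1 - α) ^ (i + 1) := by rw [one_mul, ← pow_add]; congr 1; omega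

theorem max_self_one_sub_lt_one (hα : α ∈ Ioo 0 1) : max α (1 - α) < 1 :=
  max_lt hα.2 (by linarith [hα.1])

theorem summable_salemTerm (hα : α ∈ Ioo 0 1) : Summable (salemTerm α d) :=
  .of_norm_bounded ((summable_geometric_of_lt_one (le_max_of_le_left hα.1.le)
    (max_self_one_sub_lt_one hα)).comp_injective (add_left_injective 1))
    (norm_salemTerm_le (Ioo_subset_Icc_self hα))

theorem abs_salemSum_le (hα : α ∈ Ioo 0 1) : |salemSum α d| ≤ (1 - max α (1 - α))⁻¹ := by
  have hm₀ : 0 ≤ max α (1 - α) := le_max_of_le_left hα.1.le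
  have hm₁ := max_self_one_sub_lt_one hα
  rw [← Real.norm_eq_abs]
  refine tsum_of_norm_bounded (hasSum_geometric_of_lt_one hm₀ hm₁) fun i => ?_
  exact (norm_salemTerm_le (Ioo_subset_Icc_self hα) i).trans
    (pow_le_pow_of_le_one hm₀ hm₁.le (Nat.le_succ i))

theorem salemSum_of_head_eq_zero (hα : α ∈ Ioo 0 1) (h : d 0 = 0) :
    salemSum α d = α * salemSum α (fun j => d (j + 1)) := by
  rw [salemSum, (summable_salemTerm hα).tsum_eq_zero_add, salemTerm_zero, h, salemSum,
    ← tsum_mul_left]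
  simp [salemTerm_succ_of_head_eq_zero h]

theorem salemSum_of_head_eq_one (hα : α ∈ Ioo 0 1) (h : d 0 = 1) :
    salemSum α d = α + (1 - α) * salemSum α (fun j => d (j + 1)) := by
  rw [salemSum, (summable_salemTerm hα).tsum_eq_zero_add, salemTerm_zero, h, salemSum,
    ← tsum_mul_left]
  simp [salemTerm_succ_of_head_eq_one h]

/-- On `f` with `f 0 = 0` and `f 1 = 1` this is `t ↦ α f (2t)` for `t ≤ 1/2` and
`t ↦ α + (1 - α) f (2t - 1)` for `t ≥ 1/2`; the clamping keeps it continuous for every `f`. -/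
noncomputable def salemStep (α : ℝ) (f : ℝ →ᵇ ℝ) : ℝ →ᵇ ℝ :=
  α • f.compContinuous ⟨fun t => min (2 * t) 1, by fun_prop⟩ +
    (1 - α) • f.compContinuous ⟨fun t => max (2 * t - 1) 0, by fun_prop⟩

theorem salemStep_apply (f : ℝ →ᵇ ℝ) (t : ℝ) :
    salemStep α f t = α * f (min (2 * t) 1) + (1 - α) * f (max (2 * t - 1) 0) :=
  rfl

def normalized : Set (ℝ →ᵇ ℝ) := {f | f 0 = 0 ∧ f 1 = 1 ∧ ∀ t, f t ∈ Icc 0 1}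

theorem isClosed_normalized : IsClosed normalized := by
  simp only [normalized, ofPred_and, ofPred_forall]
  exact (isClosed_eq (continuous_eval_const 0) continuous_const).inter <|
    (isClosed_eq (continuous_eval_const 1) continuous_const).inter <|
      isClosed_iInter fun t => isClosed_Icc.preimage (continuous_eval_const t)

theorem normalized_nonempty : normalized.Nonempty := by
  let p : ℝ → Icc (0 : ℝ) 1 := projIcc 0 1 zero_le_one
  refine ⟨mkOfBound ⟨fun t => p t, by fun_prop⟩ 1
    fun s t => Real.dist_le_of_mem_Icc_01 (p s).2 (p t).2, ?_, ?_, fun t => (p t).2⟩ <;>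
    simp [p]

theorem mapsTo_salemStep (hα : α ∈ Icc 0 1) : MapsTo (salemStep α) normalized normalized := by
  rintro f ⟨hf₀, hf₁, hf⟩
  refine ⟨by simp [salemStep_apply, hf₀], by norm_num [salemStep_apply, hf₁], fun t => ?_⟩
  obtain ⟨ha₀, ha₁⟩ := hf (min (2 * t) 1)
  obtain ⟨hb₀, hb₁⟩ := hf (max (2 * t - 1) 0)
  rw [salemStep_apply]
  constructor <;> nlinarith [hα.1, hα.2]

theorem dist_salemStep_le (hα : α ∈ Icc 0 1) {f g : ℝ →ᵇ ℝ} (h₀ : f 0 = g 0) (h₁ : f 1 = g 1) :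
    dist (salemStep α f) (salemStep α g) ≤ max α (1 - α) * dist f g := by
  have hfg (s : ℝ) : |f s - g s| ≤ dist f g := by
    simpa [Real.dist_eq] using dist_coe_le_dist (f := f) (g := g) s
  refine (dist_le (mul_nonneg (le_max_of_le_left hα.1) dist_nonneg)).mpr fun t => ?_
  rw [salemStep_apply, salemStep_apply, Real.dist_eq]
  rcases le_total t (1 / 2) with ht | ht
  · rw [max_eq_right (by linarith), h₀]
    calc _ = |α * (f (min (2 * t) 1) - g (min (2 * t) 1))| := by congr 1; ring
      _ ≤ α * dist f g := by
        rw [abs_mul, abs_of_nonneg hα.1]; exact mul_le_mul_of_nonneg_left (hfg _) hα.1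
      _ ≤ max α (1 - α) * dist f g := by gcongr; exact le_max_left _ _
  · rw [min_eq_right (by linarith), h₁]
    calc _ = |(1 - α) * (f (max (2 * t - 1) 0) - g (max (2 * t - 1) 0))| := by congr 1; ring
      _ ≤ (1 - α) * dist f g := by
        have h1α : 0 ≤ 1 - α := sub_nonneg.mpr hα.2
        rw [abs_mul, abs_of_nonneg h1α]; exact mul_le_mul_of_nonneg_left (hfg _) h1α
      _ ≤ max α (1 - α) * dist f g := by gcongr; exact le_max_right _ _

theorem exists_salemStep_fixedPoint (hα : α ∈ Ioo 0 1) :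
    ∃ f ∈ normalized, salemStep α f = f := by
  have hα' := Ioo_subset_Icc_self hα
  obtain ⟨f₀, hf₀⟩ := normalized_nonempty
  have hK : ContractingWith (max α (1 - α)).toNNReal
      ((mapsTo_salemStep hα').restrict (salemStep α) normalized normalized) := by
    refine ⟨by simpa using max_self_one_sub_lt_one hα, .of_dist_le_mul fun f g => ?_⟩
    rw [Real.coe_toNNReal _ (le_max_of_le_left hα.1.le)]
    exact dist_salemStep_le hα' (f.2.1.trans g.2.1.symm) (f.2.2.1.trans g.2.2.1.symm)
  obtain ⟨f, hf, hfix, -⟩ := hK.exists_fixedPoint' isClosed_normalized.isComplete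
    (mapsTo_salemStep hα') hf₀ (edist_ne_top _ _)
  exact ⟨f, hf, hfix⟩

section FixedPoint

variable {f : ℝ →ᵇ ℝ} (hfix : salemStep α f = f)
include hfix

theorem apply_half_of_salemStep_eq (h₀ : f 0 = 0) {t : ℝ} (ht : t ≤ 1) :
    f (t / 2) = α * f t := by
  conv_lhs => rw [← hfix]
  rw [salemStep_apply, min_eq_left (by linarith), max_eq_right (by linarith), h₀]
  ring_nf

theorem apply_one_add_half_of_salemStep_eq (h₁ : f 1 = 1) {t : ℝ} (ht : 0 ≤ t) :
    f ((1 + t) / 2) = α + (1 - α) * f t := by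
  conv_lhs => rw [← hfix]
  rw [salemStep_apply, min_eq_right (by linarith), max_eq_left (by linarith), h₁]
  ring_nf

theorem apply_ofDigits_eq_salemSum (hα : α ∈ Ioo 0 1) (hf : f ∈ normalized) (d : ℕ → Fin 2) :
    f (Real.ofDigits d) = salemSum α d := by
  obtain ⟨hf₀, hf₁, hf⟩ := hf
  have hm₀ : 0 ≤ max α (1 - α) := le_max_of_le_left hα.1.le
  refine sub_eq_zero.mp <| eq_zero_of_abs_le_mul_abs_comp (σ := fun d i => d (i + 1))
    (u := fun d => f (Real.ofDigits d) - salemSum α d) hm₀ (max_self_one_sub_lt_one hα)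
    (C := 1 + (1 - max α (1 - α))⁻¹) (fun d => ?_) (fun d => ?_) d
  · calc |f (Real.ofDigits d) - salemSum α d| ≤ |f (Real.ofDigits d)| + |salemSum α d| :=
          abs_sub _ _
      _ ≤ 1 + (1 - max α (1 - α))⁻¹ := by
          gcongr
          · obtain ⟨h₀, h₁⟩ := hf (Real.ofDigits d)
            exact abs_le.mpr ⟨by linarith, h₁⟩
          · exact abs_salemSum_le hα
  · rw [Real.ofDigits_eq_head_add_div]
    have ht₀ := Real.ofDigits_nonneg fun i => d (i + 1)
    have ht₁ := Real.ofDigits_le_one fun i => d (i + 1)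
    rcases Fin.exists_fin_two.mp ⟨d 0, rfl⟩ with h | h
    · rw [h, salemSum_of_head_eq_zero hα h, Fin.val_zero, Nat.cast_zero, zero_add, Nat.cast_two,
        apply_half_of_salemStep_eq hfix hf₀ ht₁, ← mul_sub, abs_mul, abs_of_pos hα.1]
      gcongr
      exact le_max_left _ _
    · rw [h, salemSum_of_head_eq_one hα h, Fin.val_one, Nat.cast_one, Nat.cast_two,
        apply_one_add_half_of_salemStep_eq hfix hf₁ ht₀, add_sub_add_left_eq_sub, ← mul_sub,
        abs_mul, abs_of_pos (sub_pos.mpr hα.2)]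
      gcongr
      exact le_max_right _ _

end FixedPoint

end Salem

/-- For `α ∈ (0,1)`, the function given on binary expansions by
`g(Σ x_i 2^{-i}) = Σ x_i (1-α)^{σ_{i-1}} α^{i-σ_{i-1}}` is well defined
(independent of the binary expansion) and continuous on `[0,1]`, mapping into `[0,1]`. -/
theorem stmt7 (α : ℝ) (hα : α ∈ Set.Ioo (0 : ℝ) 1) :
    ∃ g : ℝ → ℝ,
      (∀ x : ℕ → ℕ, (∀ i, x i ≤ 1) →
        g (∑' i : ℕ, (x (i + 1) : ℝ) / 2 ^ (i + 1)) =
          ∑' i : ℕ, (x (i + 1) : ℝ) * (1 - α) ^ (∑ j ∈ Finset.range i, x (j + 1)) *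
            α ^ ((i + 1) - ∑ j ∈ Finset.range i, x (j + 1))) ∧
      ContinuousOn g (Set.Icc 0 1) ∧
      Set.MapsTo g (Set.Icc 0 1) (Set.Icc 0 1) := by
  obtain ⟨f, hf, hfix⟩ := Salem.exists_salemStep_fixedPoint hα
  refine ⟨f, fun x hx => ?_, f.continuous.continuousOn, fun t _ => hf.2.2 t⟩
  let d : ℕ → Fin 2 := fun i => ⟨x (i + 1), Nat.lt_succ_of_le (hx (i + 1))⟩
  have hbin : ∑' i : ℕ, (x (i + 1) : ℝ) / 2 ^ (i + 1) = Real.ofDigits d :=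
    tsum_congr fun i => by simp [Real.ofDigitsTerm, d, div_eq_mul_inv]
  rw [hbin]
  exact Salem.apply_ofDigits_eq_salemSum hfix hα hf d
end

section
/- For α ∈ (0,1) with α ≠ 1/2, the function g : [0,1] → [0,1] defined on binary expansions by g(Σ_{i≥1} x_i 2^{−i}) = Σ_{i=1}^∞ x_i · (1−α)^(Σ_{j=1}^{i-1} x_j) · α^(i − Σ_{j=1}^{i-1} x_j) is strictly increasing, with g(0) = 0 and g(1) = 1. -/
/-!
Write `Salem.eval a d` for the series at the digit sequence `d`. Its terms telescope against the
weights `(1 - a) ^ (#ones) * a ^ (#zeros)` of the dyadic cylinders, so the tail after position `n`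
is at most the weight of the rank-`n` cylinder, with equality exactly when all later digits are
`1`. Hence if `d` and `e` first differ at `n`, with `d n = 0` and `e n = 1`, then
`eval a d ≤ eval a e`, with equality exactly for the pair `u0111…`, `u1000…`. This description of
the order induced by `eval a` does not involve `a`, and for `a = 1/2` the series is the binary
expansion itself; so `g := eval α ∘ (a binary expansion)` is well defined and strictly increasing.
-/

open Finset

namespace Salem

variable {a : ℝ} {d e : ℕ → Fin 2} {n : ℕ}

def digitSum (d : ℕ → Fin 2) (n : ℕ) : ℕ := ∑ j ∈ range n, (d j : ℕ)

/-- The length of the image under Salem's function of the rank-`n` dyadic interval whose points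
have first digits `d 0, …, d (n - 1)`. -/
def weight (a : ℝ) (d : ℕ → Fin 2) (n : ℕ) : ℝ :=
  (1 - a) ^ digitSum d n * a ^ (n - digitSum d n)

def term (a : ℝ) (d : ℕ → Fin 2) (i : ℕ) : ℝ :=
  (d i : ℝ) * (1 - a) ^ digitSum d i * a ^ ((i + 1) - digitSum d i)

noncomputable def eval (a : ℝ) (d : ℕ → Fin 2) : ℝ := ∑' i, term a d i

noncomputable def tail (a : ℝ) (d : ℕ → Fin 2) (n : ℕ) : ℝ := ∑' k, term a d (k + n)

lemma digitSum_le (d : ℕ → Fin 2) (n : ℕ) : digitSum d n ≤ n := by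
  simpa [digitSum] using sum_le_card_nsmul (range n) (fun j => (d j : ℕ)) 1 (fun j _ => by omega)

lemma digitSum_succ : digitSum d (n + 1) = digitSum d n + d n := sum_range_succ _ _

lemma weight_zero : weight a d 0 = 1 := by simp [weight, digitSum]

lemma weight_pos (ha : a ∈ Set.Ioo 0 1) : 0 < weight a d n := by
  have := ha.1; have := ha.2
  unfold weight; positivity

lemma weight_succ_of_eq_zero (h : d n = 0) : weight a d (n + 1) = a * weight a d n := by
  have := digitSum_le d n
  rw [weight, weight, digitSum_succ, h, Fin.val_zero, add_zero,
    show n + 1 - digitSum d n = n - digitSum d n + 1 by omega, pow_succ]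
  ring

lemma weight_succ_of_eq_one (h : d n = 1) : weight a d (n + 1) = (1 - a) * weight a d n := by
  rw [weight, weight, digitSum_succ, h, Fin.val_one, Nat.add_sub_add_right, pow_succ]
  ring

lemma term_of_eq_zero (h : d n = 0) : term a d n = 0 := by simp [term, h]

lemma term_of_eq_one (h : d n = 1) : term a d n = a * weight a d n := by
  have := digitSum_le d n
  rw [term, weight, h, show n + 1 - digitSum d n = n - digitSum d n + 1 by omega, pow_succ,
    Fin.val_one, Nat.cast_one]
  ring

lemma term_nonneg (ha : a ∈ Set.Ioo 0 1) : 0 ≤ term a d n := by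
  rcases (by omega : d n = 0 ∨ d n = 1) with h | h
  · rw [term_of_eq_zero h]
  · rw [term_of_eq_one h]; exact mul_nonneg ha.1.le (weight_pos ha).le

lemma term_add_weight_succ_le (ha : a ∈ Set.Ioo 0 1) :
    term a d n + weight a d (n + 1) ≤ weight a d n := by
  have hw := weight_pos (d := d) (n := n) ha
  rcases (by omega : d n = 0 ∨ d n = 1) with h | h
  · rw [term_of_eq_zero h, weight_succ_of_eq_zero h]; nlinarith [ha.2]
  · rw [term_of_eq_one h, weight_succ_of_eq_one h]; linarith

lemma sum_term_add_weight_le (ha : a ∈ Set.Ioo 0 1) (N M : ℕ) :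
    ∑ k ∈ range M, term a d (k + N) + weight a d (M + N) ≤ weight a d N := by
  induction M with
  | zero => simp
  | succ M ih =>
    rw [sum_range_succ, Nat.succ_add]
    linarith [term_add_weight_succ_le (d := d) (n := M + N) ha]

lemma summable_term (ha : a ∈ Set.Ioo 0 1) : Summable (term a d) :=
  summable_of_sum_range_le (fun _ => term_nonneg ha) fun M => by
    simpa [weight_zero] using
      (sum_term_add_weight_le (d := d) ha 0 M).trans' (le_add_of_nonneg_right (weight_pos ha).le)

lemma tail_nonneg (ha : a ∈ Set.Ioo 0 1) : 0 ≤ tail a d n :=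
  tsum_nonneg fun _ => term_nonneg ha

lemma tail_le_weight (ha : a ∈ Set.Ioo 0 1) : tail a d n ≤ weight a d n :=
  Real.tsum_le_of_sum_range_le (fun _ => term_nonneg ha) fun M => by
    linarith [sum_term_add_weight_le (d := d) ha n M, weight_pos (d := d) (n := M + n) ha]

lemma tail_eq_term_add_tail_succ (ha : a ∈ Set.Ioo 0 1) :
    tail a d n = term a d n + tail a d (n + 1) := by
  rw [tail, ((summable_nat_add_iff n).2 (summable_term ha)).tsum_eq_zero_add, zero_add, tail]
  simp only [Nat.add_right_comm _ 1 n, add_assoc]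

lemma eval_eq_sum_add_tail (ha : a ∈ Set.Ioo 0 1) (n : ℕ) :
    eval a d = ∑ i ∈ range n, term a d i + tail a d n :=
  ((summable_term ha).sum_add_tsum_nat_add n).symm

lemma eval_eq_tail_zero : eval a d = tail a d 0 := rfl

lemma tail_lt_weight (ha : a ∈ Set.Ioo 0 1) {m : ℕ} (hm : n ≤ m) (h : d m = 0) :
    tail a d n < weight a d n := by
  refine Nat.decreasingInduction (motive := fun k _ => tail a d k < weight a d k)
    (fun k _ ih => ?_) ?_ hm
  · rw [tail_eq_term_add_tail_succ ha]
    linarith [term_add_weight_succ_le (d := d) (n := k) ha]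
  · rw [tail_eq_term_add_tail_succ ha, term_of_eq_zero h, zero_add]
    have := tail_le_weight (d := d) (n := m + 1) ha
    rw [weight_succ_of_eq_zero h] at this
    nlinarith [weight_pos (d := d) (n := m) ha, ha.2]

lemma weight_add_of_forall_eq_one (h : ∀ i, n ≤ i → d i = 1) (k : ℕ) :
    weight a d (k + n) = (1 - a) ^ k * weight a d n := by
  induction k with
  | zero => simp
  | succ k ih =>
    rw [Nat.succ_add, weight_succ_of_eq_one (h _ (by omega)), ih, pow_succ]
    ring

lemma tail_eq_weight_iff (ha : a ∈ Set.Ioo 0 1) :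
    tail a d n = weight a d n ↔ ∀ i, n ≤ i → d i = 1 := by
  refine ⟨fun heq i hi => ?_, fun h => ?_⟩
  · by_contra hne
    exact (tail_lt_weight ha hi (by omega)).ne heq
  · have hterm : ∀ k, term a d (k + n) = a * weight a d n * (1 - a) ^ k := fun k => by
      rw [term_of_eq_one (h _ (by omega)), weight_add_of_forall_eq_one h]
      ring
    rw [tail, tsum_congr hterm, tsum_mul_left,
      tsum_geometric_of_lt_one (by linarith [ha.2]) (by linarith [ha.1]), sub_sub_cancel]
    field_simp [ha.1.ne']

lemma tail_eq_zero_iff (ha : a ∈ Set.Ioo 0 1) :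
    tail a d n = 0 ↔ ∀ i, n ≤ i → d i = 0 := by
  refine ⟨fun heq i hi => ?_, fun h => ?_⟩
  · by_contra hne
    refine (((summable_nat_add_iff n).2 (summable_term ha)).tsum_pos
      (fun _ => term_nonneg ha) (i - n) ?_).ne' heq
    rw [Nat.sub_add_cancel hi, term_of_eq_one (by omega)]
    exact mul_pos ha.1 (weight_pos ha)
  · exact (tsum_congr fun k => term_of_eq_zero (h _ (by omega))).trans tsum_zero

lemma eval_nonneg (ha : a ∈ Set.Ioo 0 1) : 0 ≤ eval a d := by
  rw [eval_eq_tail_zero]; exact tail_nonneg ha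

lemma eval_le_one (ha : a ∈ Set.Ioo 0 1) : eval a d ≤ 1 := by
  rw [eval_eq_tail_zero, ← weight_zero (a := a) (d := d)]; exact tail_le_weight ha

lemma eval_const_zero : eval a (fun _ => 0) = 0 := by simp [eval, term]

lemma eval_const_one (ha : a ∈ Set.Ioo 0 1) : eval a (fun _ => 1) = 1 := by
  rw [eval_eq_tail_zero, ← weight_zero (a := a) (d := fun _ => 1)]
  exact (tail_eq_weight_iff ha).2 fun _ _ => rfl

section FirstDifference

variable (hpre : ∀ i < n, d i = e i)
include hpre

lemma digitSum_congr {m : ℕ} (hm : m ≤ n) : digitSum d m = digitSum e m :=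
  sum_congr rfl fun j hj => by rw [hpre j ((mem_range.1 hj).trans_le hm)]

lemma weight_congr : weight a d n = weight a e n := by
  rw [weight, weight, digitSum_congr hpre le_rfl]

lemma sum_term_congr : ∑ i ∈ range n, term a d i = ∑ i ∈ range n, term a e i :=
  sum_congr rfl fun i hi => by
    rw [term, term, hpre i (mem_range.1 hi), digitSum_congr hpre (mem_range.1 hi).le]

variable (hd : d n = 0) (he : e n = 1)
include hd he

/-- Both brackets on the right are nonnegative, and vanish exactly when `d` continues with
ones and `e` with zeros. -/
lemma eval_sub_eval_eq (ha : a ∈ Set.Ioo 0 1) :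
    eval a e - eval a d = (weight a d (n + 1) - tail a d (n + 1)) + tail a e (n + 1) := by
  rw [eval_eq_sum_add_tail ha n, eval_eq_sum_add_tail ha n,
    tail_eq_term_add_tail_succ (d := d) ha, tail_eq_term_add_tail_succ (d := e) (n := n) ha,
    term_of_eq_zero hd, term_of_eq_one he, weight_succ_of_eq_zero hd, sum_term_congr hpre, weight_congr hpre]
  ring

lemma eval_le_eval (ha : a ∈ Set.Ioo 0 1) : eval a d ≤ eval a e := by
  have := eval_sub_eval_eq hpre hd he ha
  linarith [tail_le_weight (d := d) (n := n + 1) ha, tail_nonneg (d := e) (n := n + 1) ha]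

lemma eval_eq_eval_iff_of_first_diff (ha : a ∈ Set.Ioo 0 1) :
    eval a d = eval a e ↔ (∀ i, n < i → d i = 1) ∧ ∀ i, n < i → e i = 0 := by
  have hsub := eval_sub_eval_eq hpre hd he ha
  have hd' := tail_le_weight (d := d) (n := n + 1) ha
  have he' := tail_nonneg (d := e) (n := n + 1) ha
  simp only [Nat.lt_iff_add_one_le, ← tail_eq_weight_iff ha, ← tail_eq_zero_iff ha]
  constructor
  · intro h; constructor <;> linarith
  · rintro ⟨h₁, h₂⟩; linarith

end FirstDifference

/-- The lexicographic order on binary digit sequences, except that the two expansions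
`u0111…` and `u1000…` of a dyadic rational are not comparable. -/
def ExpansionLt (d e : ℕ → Fin 2) : Prop :=
  ∃ n, (∀ i < n, d i = e i) ∧ d n = 0 ∧ e n = 1 ∧
    ¬((∀ i, n < i → d i = 1) ∧ ∀ i, n < i → e i = 0)

theorem eval_lt_eval_iff (ha : a ∈ Set.Ioo 0 1) : eval a d < eval a e ↔ ExpansionLt d e := by
  constructor
  · intro hlt
    have hne : ∃ n, d n ≠ e n := Function.ne_iff.1 (by rintro rfl; exact hlt.false)
    have hpre : ∀ i < Nat.find hne, d i = e i := fun i hi => not_not.1 (Nat.find_min hne hi)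
    have hdiff := Nat.find_spec hne
    rcases (by omega : (d (Nat.find hne) = 0 ∧ e (Nat.find hne) = 1) ∨
        (d (Nat.find hne) = 1 ∧ e (Nat.find hne) = 0)) with ⟨hd, he⟩ | ⟨hd, he⟩
    · exact ⟨_, hpre, hd, he,
        fun htails => hlt.ne ((eval_eq_eval_iff_of_first_diff hpre hd he ha).2 htails)⟩
    · exact absurd hlt (eval_le_eval (fun i hi => (hpre i hi).symm) he hd ha).not_gt
  · rintro ⟨n, hpre, hd, he, htails⟩
    exact (eval_le_eval hpre hd he ha).lt_of_ne
      (mt (eval_eq_eval_iff_of_first_diff hpre hd he ha).1 htails)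

theorem eval_eq_eval_iff (ha : a ∈ Set.Ioo 0 1) :
    eval a d = eval a e ↔ ¬ExpansionLt d e ∧ ¬ExpansionLt e d := by
  rw [le_antisymm_iff, ← not_lt, ← not_lt, eval_lt_eval_iff ha, eval_lt_eval_iff ha, and_comm]

lemma half_mem_Ioo : (1 / 2 : ℝ) ∈ Set.Ioo 0 1 := by norm_num

lemma ofDigits_eq_tsum (d : ℕ → Fin 2) :
    Real.ofDigits d = ∑' i, (d i : ℝ) / 2 ^ (i + 1) := by
  simp [Real.ofDigits, Real.ofDigitsTerm, div_eq_mul_inv]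

lemma ofDigits_eq_eval_half (d : ℕ → Fin 2) : Real.ofDigits d = eval (1 / 2) d := by
  rw [ofDigits_eq_tsum]
  refine tsum_congr fun i => ?_
  rw [term, mul_assoc, show (1 : ℝ) - 1 / 2 = 1 / 2 by norm_num, ← pow_add,
    Nat.add_sub_cancel' ((digitSum_le d i).trans i.le_succ), div_pow, one_pow, mul_one_div]

lemma eval_lt_eval_of_ofDigits_lt (ha : a ∈ Set.Ioo 0 1)
    (h : Real.ofDigits d < Real.ofDigits e) : eval a d < eval a e := by
  rw [ofDigits_eq_eval_half, ofDigits_eq_eval_half, eval_lt_eval_iff half_mem_Ioo] at h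
  exact (eval_lt_eval_iff ha).2 h

lemma eval_eq_eval_of_ofDigits_eq (ha : a ∈ Set.Ioo 0 1)
    (h : Real.ofDigits d = Real.ofDigits e) : eval a d = eval a e := by
  rw [ofDigits_eq_eval_half, ofDigits_eq_eval_half, eval_eq_eval_iff half_mem_Ioo] at h
  exact (eval_eq_eval_iff ha).2 h

end Salem

theorem stmt8_general (α : ℝ) (hα : α ∈ Set.Ioo (0 : ℝ) 1) :
    ∃ g : ℝ → ℝ,
      (∀ x : ℕ → ℕ, (∀ i, x i ≤ 1) →
        g (∑' i : ℕ, (x (i + 1) : ℝ) / 2 ^ (i + 1)) =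
          ∑' i : ℕ, (x (i + 1) : ℝ) * (1 - α) ^ (∑ j ∈ Finset.range i, x (j + 1)) *
            α ^ ((i + 1) - ∑ j ∈ Finset.range i, x (j + 1))) ∧
      Set.MapsTo g (Set.Icc 0 1) (Set.Icc 0 1) ∧
      StrictMonoOn g (Set.Icc 0 1) ∧
      g 0 = 0 ∧ g 1 = 1 := by
  set g : ℝ → ℝ := fun t => Salem.eval α (Function.invFun Real.ofDigits t)
  have hg (d : ℕ → Fin 2) : g (Real.ofDigits d) = Salem.eval α d :=
    Salem.eval_eq_eval_of_ofDigits_eq hα (Function.invFun_eq ⟨d, rfl⟩)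
  have hsurj := Real.ofDigits_SurjOn (b := 2) one_lt_two
  refine ⟨g, fun x hx => ?_, fun t ht => ?_, fun s hs t ht hst => ?_, ?_, ?_⟩
  · have := hg fun i => ⟨x (i + 1), Nat.lt_succ_of_le (hx _)⟩
    rwa [Salem.ofDigits_eq_tsum] at this
  · obtain ⟨d, -, rfl⟩ := hsurj ht
    rw [hg]
    exact ⟨Salem.eval_nonneg hα, Salem.eval_le_one hα⟩
  · obtain ⟨d, -, rfl⟩ := hsurj hs
    obtain ⟨e, -, rfl⟩ := hsurj ht
    rw [hg, hg]
    exact Salem.eval_lt_eval_of_ofDigits_lt hα hst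
  · simpa only [Salem.ofDigits_eq_eval_half, Salem.eval_const_zero] using hg fun _ => 0
  · simpa only [Salem.ofDigits_eq_eval_half, Salem.eval_const_one Salem.half_mem_Ioo,
      Salem.eval_const_one hα] using hg fun _ => 1

/-- For `α ∈ (0,1)`, `α ≠ 1/2`, the function given on binary expansions by
`g(Σ x_i 2^{-i}) = Σ x_i (1-α)^{σ_{i-1}} α^{i-σ_{i-1}}` maps `[0,1]` into `[0,1]`,
is strictly increasing on `[0,1]`, with `g 0 = 0` and `g 1 = 1`. -/
theorem stmt8 (α : ℝ) (hα : α ∈ Set.Ioo (0 : ℝ) 1) (hα' : α ≠ 1 / 2) :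
    ∃ g : ℝ → ℝ,
      (∀ x : ℕ → ℕ, (∀ i, x i ≤ 1) →
        g (∑' i : ℕ, (x (i + 1) : ℝ) / 2 ^ (i + 1)) =
          ∑' i : ℕ, (x (i + 1) : ℝ) * (1 - α) ^ (∑ j ∈ Finset.range i, x (j + 1)) *
            α ^ ((i + 1) - ∑ j ∈ Finset.range i, x (j + 1))) ∧
      Set.MapsTo g (Set.Icc 0 1) (Set.Icc 0 1) ∧
      StrictMonoOn g (Set.Icc 0 1) ∧
      g 0 = 0 ∧ g 1 = 1 :=
  stmt8_general α hα
end

section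
/- Let M ≥ 2 be an integer, num(n) = M^(s₂(n)) and cum(n) = Σ_{m=0}^n num(m) (so cum(2^k − 1) = (M+1)^k). Then for any n with binary expansion n = Σ_{i=1}^k x_i 2^{k−i} (digits x_i ∈ {0,1}), cum(n − 1) = Σ_{i=1}^k x_i · num(Σ_{j=1}^{i−1} x_j 2^{k−j}) · cum(2^{k−i} − 1) = Σ_{i=1}^k x_i · M^(Σ_{j=1}^{i−1} x_j) · (M+1)^(k−i). -/
/-!
Reading the word `x₁ … x_k` most significant bit first, appending a bit `d` maps `n` to
`2n + d`. Splitting `m < 2n + d` by parity gives `cum(2n + d) = (M + 1) cum(n) + d M^{s₂(n)}`,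
since `s₂(2m) = s₂(m)` and `s₂(2m + 1) = s₂(m) + 1`. Unrolling this recursion along the word
gives the second formula; the first one is the same sum, because the prefix
`Σ_{j<i} x_j 2^{k-j}` is `2^{k-i+1}` times the value of `x₁ … x_{i-1}` and `cum(2^t) = (M + 1)^t`.
-/

open Finset

lemma digits_two_sum_add_two_mul {d : ℕ} (hd : d < 2) (p : ℕ) :
    (Nat.digits 2 (d + 2 * p)).sum = d + (Nat.digits 2 p).sum := by
  by_cases h : d = 0 ∧ p = 0
  · simp [h]
  · rw [Nat.digits_add 2 one_lt_two d p hd (by tauto), List.sum_cons]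

lemma digits_two_sum_two_mul (p : ℕ) : (Nat.digits 2 (2 * p)).sum = (Nat.digits 2 p).sum := by
  simpa using digits_two_sum_add_two_mul two_pos p

lemma digits_two_sum_two_mul_add_one (p : ℕ) :
    (Nat.digits 2 (2 * p + 1)).sum = (Nat.digits 2 p).sum + 1 := by
  rw [add_comm, digits_two_sum_add_two_mul one_lt_two, add_comm]

lemma digits_two_sum_two_pow_mul (t m : ℕ) :
    (Nat.digits 2 (2 ^ t * m)).sum = (Nat.digits 2 m).sum := by
  rcases Nat.eq_zero_or_pos m with rfl | hm
  · simp
  · simp [Nat.digits_base_pow_mul one_lt_two hm]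

def ofBits (x : ℕ → ℕ) (k : ℕ) : ℕ := ∑ i ∈ Icc 1 k, x i * 2 ^ (k - i)

lemma ofBits_succ (x : ℕ → ℕ) (k : ℕ) : ofBits x (k + 1) = x (k + 1) + 2 * ofBits x k := by
  rw [ofBits, sum_Icc_succ_top (by omega), Nat.sub_self, pow_zero, mul_one, add_comm, ofBits,
    mul_sum]
  congr 1
  refine sum_congr rfl fun i hi => ?_
  rw [Nat.sub_add_comm (mem_Icc.mp hi).2, pow_succ]
  ring

lemma digits_two_sum_ofBits {x : ℕ → ℕ} (hx : ∀ i, x i ≤ 1) (k : ℕ) :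
    (Nat.digits 2 (ofBits x k)).sum = ∑ i ∈ Icc 1 k, x i := by
  induction k with
  | zero => simp [ofBits]
  | succ k ih =>
    rw [ofBits_succ, digits_two_sum_add_two_mul (by linarith [hx (k + 1)]), ih,
      sum_Icc_succ_top (by omega), add_comm]

lemma sum_Icc_mul_two_pow_eq_two_pow_mul_ofBits (x : ℕ → ℕ) {i k : ℕ} (hik : i ≤ k + 1) :
    ∑ j ∈ Icc 1 (i - 1), x j * 2 ^ (k - j) = 2 ^ (k + 1 - i) * ofBits x (i - 1) := by
  rw [ofBits, mul_sum]
  refine sum_congr rfl fun j hj => ?_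
  obtain ⟨hj1, hji⟩ := mem_Icc.mp hj
  rw [show k - j = (k + 1 - i) + (i - 1 - j) by omega, pow_add]
  ring

section BinaryCum

variable {R : Type*} [CommSemiring R] (a : R)

/-- `binaryCum a n = Σ_{m<n} a^{s₂(m)}`, i.e. the paper's `cum(n - 1)`. -/
def binaryCum (n : ℕ) : R := ∑ m ∈ range n, a ^ (Nat.digits 2 m).sum

lemma binaryCum_two_mul (p : ℕ) : binaryCum a (2 * p) = (a + 1) * binaryCum a p := by
  induction p with
  | zero => simp [binaryCum]
  | succ p ih =>
    simp only [binaryCum] at ih ⊢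
    rw [show 2 * (p + 1) = 2 * p + 1 + 1 by ring, sum_range_succ, sum_range_succ, ih,
      sum_range_succ, digits_two_sum_two_mul, digits_two_sum_two_mul_add_one]
    ring

lemma binaryCum_add_two_mul {d : ℕ} (hd : d < 2) (p : ℕ) :
    binaryCum a (d + 2 * p) = (a + 1) * binaryCum a p + d * a ^ (Nat.digits 2 p).sum := by
  interval_cases d
  · simp [binaryCum_two_mul]
  · rw [add_comm, binaryCum, sum_range_succ, ← binaryCum, binaryCum_two_mul,
      digits_two_sum_two_mul, Nat.cast_one, one_mul]

lemma binaryCum_two_pow (t : ℕ) : binaryCum a (2 ^ t) = (a + 1) ^ t := by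
  induction t with
  | zero => simp [binaryCum]
  | succ t ih => rw [pow_succ', binaryCum_two_mul, ih, pow_succ']

lemma binaryCum_ofBits {x : ℕ → ℕ} (hx : ∀ i, x i ≤ 1) (k : ℕ) :
    binaryCum a (ofBits x k) =
      ∑ i ∈ Icc 1 k, (x i : R) * a ^ (∑ j ∈ Icc 1 (i - 1), x j) * (a + 1) ^ (k - i) := by
  induction k with
  | zero => simp [binaryCum, ofBits]
  | succ k ih =>
    rw [ofBits_succ, binaryCum_add_two_mul a (by linarith [hx (k + 1)]), ih,
      digits_two_sum_ofBits hx, sum_Icc_succ_top (by omega), Nat.add_sub_cancel, Nat.sub_self,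
      pow_zero, mul_one, mul_sum]
    congr 1
    refine sum_congr rfl fun i hi => ?_
    rw [Nat.sub_add_comm (mem_Icc.mp hi).2, pow_succ]
    ring

end BinaryCum

theorem stmt11_general (M : ℕ) (k : ℕ) (x : ℕ → ℕ) (hx : ∀ i, x i ≤ 1) :
    (∑ m ∈ Finset.range (∑ i ∈ Finset.Icc 1 k, x i * 2 ^ (k - i)),
        M ^ (Nat.digits 2 m).sum) =
      (∑ i ∈ Finset.Icc 1 k,
        x i * M ^ (Nat.digits 2 (∑ j ∈ Finset.Icc 1 (i - 1), x j * 2 ^ (k - j))).sum *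
          (∑ m ∈ Finset.range (2 ^ (k - i)), M ^ (Nat.digits 2 m).sum)) ∧
    (∑ m ∈ Finset.range (∑ i ∈ Finset.Icc 1 k, x i * 2 ^ (k - i)),
        M ^ (Nat.digits 2 m).sum) =
      ∑ i ∈ Finset.Icc 1 k,
        x i * M ^ (∑ j ∈ Finset.Icc 1 (i - 1), x j) * (M + 1) ^ (k - i) := by
  have hcum : binaryCum M (ofBits x k) =
      ∑ i ∈ Icc 1 k, x i * M ^ (∑ j ∈ Icc 1 (i - 1), x j) * (M + 1) ^ (k - i) := by
    simpa only [Nat.cast_id] using binaryCum_ofBits M hx k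
  refine ⟨hcum.trans (sum_congr rfl fun i hi => ?_), hcum⟩
  have hik := (mem_Icc.mp hi).2
  rw [sum_Icc_mul_two_pow_eq_two_pow_mul_ofBits x (by omega), digits_two_sum_two_pow_mul,
    digits_two_sum_ofBits hx]
  exact congrArg _ (binaryCum_two_pow M (k - i)).symm

/-- Self-similar decomposition formula: with `num m = M^{s₂(m)}`, `cum(n-1) = Σ_{m<n} num m`,
and `n = Σ_{i=1}^k x_i 2^{k-i}`,
`cum(n-1) = Σ_{i=1}^k x_i · num(Σ_{j<i} x_j 2^{k-j}) · cum(2^{k-i}-1)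
          = Σ_{i=1}^k x_i · M^{Σ_{j<i} x_j} · (M+1)^{k-i}`. -/
theorem stmt11 (M : ℕ) (hM : 2 ≤ M) (k : ℕ) (x : ℕ → ℕ) (hx : ∀ i, x i ≤ 1) :
    (∑ m ∈ Finset.range (∑ i ∈ Finset.Icc 1 k, x i * 2 ^ (k - i)),
        M ^ (Nat.digits 2 m).sum) =
      (∑ i ∈ Finset.Icc 1 k,
        x i * M ^ (Nat.digits 2 (∑ j ∈ Finset.Icc 1 (i - 1), x j * 2 ^ (k - j))).sum *
          (∑ m ∈ Finset.range (2 ^ (k - i)), M ^ (Nat.digits 2 m).sum)) ∧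
    (∑ m ∈ Finset.range (∑ i ∈ Finset.Icc 1 k, x i * 2 ^ (k - i)),
        M ^ (Nat.digits 2 m).sum) =
      ∑ i ∈ Finset.Icc 1 k,
        x i * M ^ (∑ j ∈ Finset.Icc 1 (i - 1), x j) * (M + 1) ^ (k - i) :=
  stmt11_general M k x hx
end
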